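/- arXiv:2111.15221 — 3 statements merged into one kernel-verified Lean document; each statement's English description precedes it below -/
import Mathlib

section
/- Let k ≥ 1 be a natural number, let λ : Fin k → ℝ satisfy 0 ≤ λ s ≤ 1 for all s, and let ε be a real number with 0 < ε < 1. Assume (1/k)·∑_{s} (λ s − (λ s)²)² ≤ ε·(ε − ε²)². Define μ s := 1 if λ s ≥ 1 − ε and μ s := 0 otherwise. Then (1/k)·∑_{s} (λ s − μ s)² ≤ ε² + ε·(1 − ε)². -/
/-!
Eigenvalues in `[0, ε]` or `[1 - ε, 1]` are moved by at most `ε` when passing from `λ` to `μ`,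
while an eigenvalue in the middle region `(ε, 1 - ε)` is moved by less than `1 - ε`. On the middle
region `λ - λ² > ε - ε²`, so by Markov's inequality the hypothesis on the average of `(λ - λ²)²`
leaves at most a proportion `ε` of the eigenvalues there.
-/

open Finset

theorem Finset.card_filter_nsmul_le_sum {ι M : Type*} [AddCommMonoid M] [PartialOrder M]
    [IsOrderedAddMonoid M] (s : Finset ι) (f : ι → M) (p : ι → Prop) [DecidablePred p] (c : M)
    (hf : ∀ i ∈ s, 0 ≤ f i) (hp : ∀ i ∈ s, p i → c ≤ f i) :
    #(s.filter p) • c ≤ ∑ i ∈ s, f i :=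
  calc #(s.filter p) • c ≤ ∑ i ∈ s.filter p, f i :=
        card_nsmul_le_sum _ _ _ fun i hi ↦ hp i (mem_filter.1 hi).1 (mem_filter.1 hi).2
    _ ≤ ∑ i ∈ s, f i := sum_le_sum_of_subset_of_nonneg (filter_subset _ _) fun i hi _ ↦ hf i hi

theorem sub_sq_lt_sub_sq_of_lt_of_lt_one_sub {ε x : ℝ} (hεx : ε < x) (hx : x < 1 - ε) :
    ε - ε ^ 2 < x - x ^ 2 := by
  nlinarith [mul_pos (sub_pos.2 hεx) (sub_pos.2 hx)]

theorem sq_sub_threshold_le {ε x : ℝ} (hx0 : 0 ≤ x) (hx1 : x ≤ 1) :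
    (x - if 1 - ε ≤ x then 1 else 0) ^ 2 ≤
      ε ^ 2 + if ε < x ∧ x < 1 - ε then (1 - ε) ^ 2 else 0 := by
  split_ifs with hhigh hmid hmid
  · nlinarith
  · nlinarith
  · nlinarith
  · have : x ≤ ε := by by_contra! h; exact hmid ⟨h, lt_of_not_ge hhigh⟩
    nlinarith

section Threshold

variable {ι : Type*} [Fintype ι] {lam : ι → ℝ} {ε : ℝ}

theorem card_middle_le (hε0 : 0 < ε) (hε1 : ε < 1)
    (hsum : ∑ s, (lam s - lam s ^ 2) ^ 2 ≤ Fintype.card ι * (ε * (ε - ε ^ 2) ^ 2)) :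
    (#({s | ε < lam s ∧ lam s < 1 - ε} : Finset ι) : ℝ) ≤ ε * Fintype.card ι := by
  have hgap : 0 < ε - ε ^ 2 := by nlinarith
  have hmarkov := card_filter_nsmul_le_sum univ (fun s ↦ (lam s - lam s ^ 2) ^ 2)
    (fun s ↦ ε < lam s ∧ lam s < 1 - ε) ((ε - ε ^ 2) ^ 2) (fun s _ ↦ sq_nonneg _)
    fun s _ hs ↦ pow_le_pow_left₀ hgap.le
      (sub_sq_lt_sub_sq_of_lt_of_lt_one_sub hs.1 hs.2).le 2
  rw [nsmul_eq_mul] at hmarkov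
  nlinarith [pow_pos hgap 2]

theorem sum_sq_sub_threshold_le (hlam : ∀ s, 0 ≤ lam s ∧ lam s ≤ 1) (hε0 : 0 < ε) (hε1 : ε < 1)
    (hsum : ∑ s, (lam s - lam s ^ 2) ^ 2 ≤ Fintype.card ι * (ε * (ε - ε ^ 2) ^ 2)) :
    ∑ s, (lam s - if 1 - ε ≤ lam s then 1 else 0) ^ 2 ≤
      Fintype.card ι * (ε ^ 2 + ε * (1 - ε) ^ 2) := by
  have hmiddle := card_middle_le hε0 hε1 hsum
  calc ∑ s, (lam s - if 1 - ε ≤ lam s then 1 else 0) ^ 2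
      ≤ ∑ s, (ε ^ 2 + if ε < lam s ∧ lam s < 1 - ε then (1 - ε) ^ 2 else 0) :=
        sum_le_sum fun s _ ↦ sq_sub_threshold_le (hlam s).1 (hlam s).2
    _ = Fintype.card ι * ε ^ 2 +
          #({s | ε < lam s ∧ lam s < 1 - ε} : Finset ι) * (1 - ε) ^ 2 := by
        simp [sum_add_distrib, sum_ite]
    _ ≤ Fintype.card ι * (ε ^ 2 + ε * (1 - ε) ^ 2) := by
        nlinarith [mul_le_mul_of_nonneg_right hmiddle (sq_nonneg (1 - ε))]

end Threshold

theorem stmt_1 (k : ℕ) (hk : 1 ≤ k) (lam : Fin k → ℝ)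
    (hlam : ∀ s, 0 ≤ lam s ∧ lam s ≤ 1) (ε : ℝ) (hε0 : 0 < ε) (hε1 : ε < 1)
    (hsum : (1 / (k : ℝ)) * ∑ s, (lam s - (lam s) ^ 2) ^ 2 ≤ ε * (ε - ε ^ 2) ^ 2)
    (μ : Fin k → ℝ) (hμ : ∀ s, μ s = if 1 - ε ≤ lam s then 1 else 0) :
    (1 / (k : ℝ)) * ∑ s, (lam s - μ s) ^ 2 ≤ ε ^ 2 + ε * (1 - ε) ^ 2 := by
  obtain rfl : μ = fun s ↦ if 1 - ε ≤ lam s then 1 else 0 := funext hμ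
  have hk' : (0 : ℝ) < k := by exact_mod_cast hk
  rw [one_div_mul_eq_div, div_le_iff₀ hk'] at hsum ⊢
  have := sum_sq_sub_threshold_le hlam hε0 hε1 (by rwa [Fintype.card_fin, mul_comm])
  rwa [Fintype.card_fin, mul_comm] at this
end

section
/- Let k ≥ 1, let e ∈ M_k(ℂ) be a Hermitian matrix all of whose eigenvalues lie in [0, 1] (equivalently, e and 1 − e are positive semidefinite), and let 0 < ε < 1. Write the spectral decomposition e = U·diag(λ₁,…,λ_k)·U*, where U is a unitary of eigenvectors and λ_s are the eigenvalues of e, and define the spectral projection P := U·diag(μ₁,…,μ_k)·U*, where μ_s := 1 if λ_s ≥ 1 − ε and μ_s := 0 otherwise. If (1/k)·Re tr((e − e²)*·(e − e²)) ≤ ε·(ε − ε²)², then (1/k)·Re tr((e − P)*·(e − P)) ≤ ε² + ε·(1 − ε)². -/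
/-!
Conjugating by `U` turns every quantity into a sum over the eigenvalues, so it suffices to bound
`(λ - μ)²` pointwise. If `λ ≥ 1 - ε` then `(λ - μ)² = (1 - λ)² ≤ ε²`; if `λ < 1 - ε` then
`ε λ ≤ λ (1 - λ)`, so `λ² ≤ ((λ - λ²) / ε)²`. Averaging this Chebyshev-type bound
`(λ - μ)² ≤ ε² + ((λ - λ²) / ε)²` against the hypothesis gives `ε² + ε (1 - ε)²`.
-/

open Matrix

theorem sq_sub_spectralCutoff_le {ε x : ℝ} (hε : 0 < ε) (hx0 : 0 ≤ x) (hx1 : x ≤ 1) :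
    (x - if 1 - ε ≤ x then 1 else 0) ^ 2 ≤ ε ^ 2 + ((x - x ^ 2) / ε) ^ 2 := by
  split_ifs
  · nlinarith [sq_nonneg ((x - x ^ 2) / ε)]
  · have hle : x ≤ (x - x ^ 2) / ε := by
      rw [le_div_iff₀ hε]
      nlinarith
    nlinarith [sq_nonneg ε]

theorem mean_sq_sub_spectralCutoff_le {ι : Type*} [Fintype ι] {ε : ℝ} (hε : 0 < ε)
    (lam : ι → ℝ) (hlam : ∀ s, 0 ≤ lam s ∧ lam s ≤ 1)
    (hmean : 1 / (Fintype.card ι : ℝ) * ∑ s, (lam s - lam s ^ 2) ^ 2 ≤ ε * (ε - ε ^ 2) ^ 2) :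
    1 / (Fintype.card ι : ℝ) * ∑ s, (lam s - if 1 - ε ≤ lam s then 1 else 0) ^ 2
      ≤ ε ^ 2 + ε * (1 - ε) ^ 2 := by
  set c : ℝ := 1 / (Fintype.card ι : ℝ)
  have hc_card : c * Fintype.card ι ≤ 1 := by
    rcases (Fintype.card ι).eq_zero_or_pos with h | h
    · simp [h]
    · simp [c, h.ne']
  calc c * ∑ s, (lam s - if 1 - ε ≤ lam s then 1 else 0) ^ 2
      ≤ c * ∑ s, (ε ^ 2 + ((lam s - lam s ^ 2) / ε) ^ 2) := by
        gcongr with s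
        exact sq_sub_spectralCutoff_le hε (hlam s).1 (hlam s).2
    _ = (c * Fintype.card ι) * ε ^ 2 + (c * ∑ s, (lam s - lam s ^ 2) ^ 2) / ε ^ 2 := by
        simp only [Finset.sum_add_distrib, Finset.sum_const, Finset.card_univ, nsmul_eq_mul,
          div_pow, ← Finset.sum_div]
        ring
    _ ≤ 1 * ε ^ 2 + ε * (ε - ε ^ 2) ^ 2 / ε ^ 2 := by gcongr
    _ = ε ^ 2 + ε * (1 - ε) ^ 2 := by field_simp

section UnitaryConj

variable {n 𝕜 : Type*} [Fintype n] [RCLike 𝕜] {U : Matrix n n 𝕜}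

theorem unitary_conj_sub_unitary_conj (A B : Matrix n n 𝕜) :
    U * A * Uᴴ - U * B * Uᴴ = U * (A - B) * Uᴴ := by
  rw [Matrix.mul_sub, Matrix.sub_mul]

theorem conjTranspose_unitary_conj (A : Matrix n n 𝕜) : (U * A * Uᴴ)ᴴ = U * Aᴴ * Uᴴ := by
  rw [conjTranspose_mul, conjTranspose_mul, conjTranspose_conjTranspose, Matrix.mul_assoc]

variable [DecidableEq n]

theorem unitary_conj_mul_unitary_conj (hU : U ∈ unitaryGroup n 𝕜) (A B : Matrix n n 𝕜) :
    U * A * Uᴴ * (U * B * Uᴴ) = U * (A * B) * Uᴴ := by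
  have hUU : Uᴴ * U = 1 := mem_unitaryGroup_iff'.mp hU
  simp only [Matrix.mul_assoc, ← Matrix.mul_assoc Uᴴ U, hUU, Matrix.one_mul]

theorem trace_unitary_conj (hU : U ∈ unitaryGroup n 𝕜) (A : Matrix n n 𝕜) :
    trace (U * A * Uᴴ) = trace A := by
  have hUU : Uᴴ * U = 1 := mem_unitaryGroup_iff'.mp hU
  rw [trace_mul_cycle, hUU, Matrix.one_mul]

end UnitaryConj

theorem re_trace_conjTranspose_mul_self_unitary_conj_diagonal {n : Type*} [Fintype n]
    [DecidableEq n] {U : Matrix n n ℂ} (hU : U ∈ unitaryGroup n ℂ) (d : n → ℝ) :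
    (trace ((U * diagonal (fun s => (d s : ℂ)) * Uᴴ)ᴴ *
      (U * diagonal (fun s => (d s : ℂ)) * Uᴴ))).re = ∑ s, d s ^ 2 := by
  rw [conjTranspose_unitary_conj, unitary_conj_mul_unitary_conj hU, trace_unitary_conj hU,
    diagonal_conjTranspose, diagonal_mul_diagonal, trace_diagonal, Complex.re_sum]
  congr 1 with s
  simp [sq]

open Matrix in
theorem stmt_2_general (k : ℕ) (e U : Matrix (Fin k) (Fin k) ℂ)
    (hU : U ∈ Matrix.unitaryGroup (Fin k) ℂ)
    (lam : Fin k → ℝ) (hlam : ∀ s, 0 ≤ lam s ∧ lam s ≤ 1)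
    (hdecomp : e = U * Matrix.diagonal (fun s => (lam s : ℂ)) * Uᴴ)
    (ε : ℝ) (hε0 : 0 < ε)
    (P : Matrix (Fin k) (Fin k) ℂ)
    (hP : P = U * Matrix.diagonal
      (fun s => if 1 - ε ≤ lam s then (1 : ℂ) else 0) * Uᴴ)
    (hsum : (1 / (k : ℝ)) * (Matrix.trace ((e - e ^ 2)ᴴ * (e - e ^ 2))).re
      ≤ ε * (ε - ε ^ 2) ^ 2) :
    (1 / (k : ℝ)) * (Matrix.trace ((e - P)ᴴ * (e - P))).re
      ≤ ε ^ 2 + ε * (1 - ε) ^ 2 := by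
  have he_sub_sq : e - e ^ 2 = U * diagonal (fun s => ((lam s - lam s ^ 2 : ℝ) : ℂ)) * Uᴴ := by
    rw [sq, hdecomp, unitary_conj_mul_unitary_conj hU, unitary_conj_sub_unitary_conj,
      diagonal_mul_diagonal, diagonal_sub]
    push_cast
    ring_nf
  have he_sub_P : e - P = U * diagonal
      (fun s => ((lam s - if 1 - ε ≤ lam s then 1 else 0 : ℝ) : ℂ)) * Uᴴ := by
    rw [hdecomp, hP, unitary_conj_sub_unitary_conj, diagonal_sub]
    congr 3 with s
    split_ifs <;> simp
  rw [he_sub_sq, re_trace_conjTranspose_mul_self_unitary_conj_diagonal hU] at hsum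
  rw [he_sub_P, re_trace_conjTranspose_mul_self_unitary_conj_diagonal hU]
  simpa using mean_sq_sub_spectralCutoff_le hε0 lam hlam (by simpa using hsum)

open Matrix in
theorem stmt_2 (k : ℕ) (hk : 1 ≤ k) (e U : Matrix (Fin k) (Fin k) ℂ)
    (he : e.IsHermitian) (hU : U ∈ Matrix.unitaryGroup (Fin k) ℂ)
    (lam : Fin k → ℝ) (hlam : ∀ s, 0 ≤ lam s ∧ lam s ≤ 1)
    (hdecomp : e = U * Matrix.diagonal (fun s => (lam s : ℂ)) * Uᴴ)
    (ε : ℝ) (hε0 : 0 < ε) (hε1 : ε < 1)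
    (P : Matrix (Fin k) (Fin k) ℂ)
    (hP : P = U * Matrix.diagonal
      (fun s => if 1 - ε ≤ lam s then (1 : ℂ) else 0) * Uᴴ)
    (hsum : (1 / (k : ℝ)) * (Matrix.trace ((e - e ^ 2)ᴴ * (e - e ^ 2))).re
      ≤ ε * (ε - ε ^ 2) ^ 2) :
    (1 / (k : ℝ)) * (Matrix.trace ((e - P)ᴴ * (e - P))).re
      ≤ ε ^ 2 + ε * (1 - ε) ^ 2 :=
  stmt_2_general k e U hU lam hlam hdecomp ε hε0 P hP hsum
end

section
/- Let k : ℕ → ℕ with k(n) ≥ 1, and for each n let e_n ∈ M_{k(n)}(ℂ) be a Hermitian matrix all of whose eigenvalues lie in [0, 1]. Let ε_n be real numbers with 0 < ε_n < 1 and ε_n → 0, and assume for every n that (1/k(n))·Re tr((e_n − e_n²)*·(e_n − e_n²)) ≤ ε_n·(ε_n − ε_n²)². For each n define P_n := U_n·diag(μ₁,…,μ_{k(n)})·U_n*, where e_n = U_n·diag(λ₁,…,λ_{k(n)})·U_n* is a spectral decomposition of e_n and μ_s := 1 if λ_s ≥ 1 − ε_n and μ_s := 0 otherwise. Then (1/k(n))·Re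 tr((e_n − P_n)*·(e_n − P_n)) → 0 as n → ∞, i.e. ‖e_n − P_n‖_{2,tr} → 0. -/
/-!
Conjugation by the unitary `U` turns both normalized Hilbert–Schmidt norms into averages over
the eigenvalues `λ` of `e`. Cutting at `1 - ε` moves an eigenvalue by at most `ε` if it lies
within `ε` of `0` or `1`, and by at most `1` otherwise; in the latter case
`λ - λ² ≥ ε - ε²`, so by Markov's inequality such eigenvalues make up a proportion at most
`‖e - e²‖² / (ε - ε²)² ≤ ε`. Hence `‖e - P‖² ≤ ε² + ε → 0`.
-/

open Matrix Filter Set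

namespace Matrix

variable {ι R : Type*} [Fintype ι] [DecidableEq ι] [CommSemiring R] [StarRing R]

theorem trace_conjStarAlgAut (u : unitary (Matrix ι ι R)) (x : Matrix ι ι R) :
    trace (Unitary.conjStarAlgAut R _ u x) = trace x := by
  rw [Unitary.conjStarAlgAut_apply, trace_mul_cycle, Unitary.star_mul_self_of_mem u.2, one_mul]

theorem trace_conjTranspose_mul_self_conjStarAlgAut (u : unitary (Matrix ι ι R))
    (x : Matrix ι ι R) :
    trace ((Unitary.conjStarAlgAut R _ u x)ᴴ * Unitary.conjStarAlgAut R _ u x) =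
      trace (xᴴ * x) := by
  rw [← star_eq_conjTranspose, ← map_star, ← map_mul, trace_conjStarAlgAut,
    star_eq_conjTranspose]

theorem re_trace_conjTranspose_mul_self_diagonal_ofReal (f : ι → ℝ) :
    (trace ((diagonal fun s => (f s : ℂ))ᴴ * diagonal fun s => (f s : ℂ))).re =
      ∑ s, f s ^ 2 := by
  simp [diagonal_conjTranspose, diagonal_mul_diagonal, trace_diagonal, Complex.re_sum, sq]

end Matrix

theorem sq_sub_ite_le {l ε : ℝ} (hl : l ∈ Icc 0 1) (hε0 : 0 < ε) (hε1 : ε < 1) :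
    (l - if 1 - ε ≤ l then 1 else 0) ^ 2 ≤ ε ^ 2 + (l - l ^ 2) ^ 2 / (ε - ε ^ 2) ^ 2 := by
  obtain ⟨hl0, hl1⟩ := hl
  have hδ : 0 < (ε - ε ^ 2) ^ 2 := pow_pos (by nlinarith) 2
  have hfrac : 0 ≤ (l - l ^ 2) ^ 2 / (ε - ε ^ 2) ^ 2 := by positivity
  split_ifs with h
  · nlinarith
  by_cases hlε : l ≤ ε
  · nlinarith
  have hgap : ε - ε ^ 2 ≤ l - l ^ 2 := by
    have : 0 < (l - ε) * (1 - l - ε) := mul_pos (by linarith) (by linarith)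
    nlinarith
  have : 1 ≤ (l - l ^ 2) ^ 2 / (ε - ε ^ 2) ^ 2 :=
    (one_le_div hδ).mpr (pow_le_pow_left₀ (by nlinarith) hgap 2)
  nlinarith

theorem mean_sq_sub_ite_le {ι : Type*} [Fintype ι] {lam : ι → ℝ} (hlam : ∀ s, lam s ∈ Icc 0 1)
    {ε : ℝ} (hε0 : 0 < ε) (hε1 : ε < 1)
    (hmean : 1 / (Fintype.card ι : ℝ) * ∑ s, (lam s - lam s ^ 2) ^ 2 ≤ ε * (ε - ε ^ 2) ^ 2) :
    1 / (Fintype.card ι : ℝ) * ∑ s, (lam s - if 1 - ε ≤ lam s then 1 else 0) ^ 2 ≤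
      ε ^ 2 + ε := by
  set K := (Fintype.card ι : ℝ)
  have hδ : 0 < (ε - ε ^ 2) ^ 2 := pow_pos (by nlinarith) 2
  have hK : 1 / K * K ≤ 1 := by
    rcases eq_or_ne K 0 with h | h
    · simp [h]
    · rw [one_div_mul_cancel h]
  have hpt : ∑ s, (lam s - if 1 - ε ≤ lam s then 1 else 0) ^ 2 ≤
      K * ε ^ 2 + (∑ s, (lam s - lam s ^ 2) ^ 2) / (ε - ε ^ 2) ^ 2 := by
    calc _ ≤ ∑ s, (ε ^ 2 + (lam s - lam s ^ 2) ^ 2 / (ε - ε ^ 2) ^ 2) :=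
          Finset.sum_le_sum fun s _ => sq_sub_ite_le (hlam s) hε0 hε1
      _ = _ := by rw [Finset.sum_add_distrib, ← Finset.sum_div]; simp [K]
  have hfrac : (1 / K * ∑ s, (lam s - lam s ^ 2) ^ 2) / (ε - ε ^ 2) ^ 2 ≤ ε :=
    (div_le_iff₀ hδ).mpr hmean
  calc _ ≤ 1 / K * (K * ε ^ 2 + (∑ s, (lam s - lam s ^ 2) ^ 2) / (ε - ε ^ 2) ^ 2) :=
        mul_le_mul_of_nonneg_left hpt (by positivity)
    _ = 1 / K * K * ε ^ 2 + (1 / K * ∑ s, (lam s - lam s ^ 2) ^ 2) / (ε - ε ^ 2) ^ 2 := by ring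
    _ ≤ ε ^ 2 + ε := by nlinarith

theorem normalized_trace_sq_sub_spectralProjection_mem_Icc {ι : Type*} [Fintype ι]
    [DecidableEq ι]
    {U e P : Matrix ι ι ℂ} (hU : U ∈ unitaryGroup ι ℂ) {lam : ι → ℝ}
    (hlam : ∀ s, lam s ∈ Icc 0 1) {ε : ℝ} (hε0 : 0 < ε) (hε1 : ε < 1)
    (he : e = U * diagonal (fun s => (lam s : ℂ)) * Uᴴ)
    (hP : P = U * diagonal (fun s => if 1 - ε ≤ lam s then (1 : ℂ) else 0) * Uᴴ)
    (hsum : 1 / (Fintype.card ι : ℝ) * (trace ((e - e ^ 2)ᴴ * (e - e ^ 2))).re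
      ≤ ε * (ε - ε ^ 2) ^ 2) :
    1 / (Fintype.card ι : ℝ) * (trace ((e - P)ᴴ * (e - P))).re ∈ Icc 0 (ε ^ 2 + ε) := by
  set Φ := Unitary.conjStarAlgAut ℂ _ (⟨U, hU⟩ : unitary (Matrix ι ι ℂ))
  have he' : e = Φ (diagonal fun s => (lam s : ℂ)) := he
  have hee : e - e ^ 2 = Φ (diagonal fun s => ((lam s - lam s ^ 2 : ℝ) : ℂ)) := by
    rw [he', ← map_pow, ← map_sub, diagonal_pow, diagonal_sub]
    simp only [Pi.pow_apply, Complex.ofReal_sub, Complex.ofReal_pow]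
  have heP :
      e - P = Φ (diagonal fun s => ((lam s - if 1 - ε ≤ lam s then 1 else 0 : ℝ) : ℂ)) := by
    have hP' : P = Φ (diagonal fun s => if 1 - ε ≤ lam s then (1 : ℂ) else 0) := hP
    rw [he', hP', ← map_sub, diagonal_sub]
    congr! 3 with s
    split_ifs <;> simp
  rw [hee, trace_conjTranspose_mul_self_conjStarAlgAut,
    re_trace_conjTranspose_mul_self_diagonal_ofReal] at hsum
  rw [heP, trace_conjTranspose_mul_self_conjStarAlgAut,
    re_trace_conjTranspose_mul_self_diagonal_ofReal]
  exact ⟨by positivity, mean_sq_sub_ite_le hlam hε0 hε1 hsum⟩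

open Matrix Filter in
theorem stmt_3_general (k : ℕ → ℕ)
    (e U : (n : ℕ) → Matrix (Fin (k n)) (Fin (k n)) ℂ)
    (hU : ∀ n, U n ∈ Matrix.unitaryGroup (Fin (k n)) ℂ)
    (lam : (n : ℕ) → Fin (k n) → ℝ)
    (hlam : ∀ n s, 0 ≤ lam n s ∧ lam n s ≤ 1)
    (hdecomp : ∀ n, e n = U n * Matrix.diagonal (fun s => (lam n s : ℂ)) * (U n)ᴴ)
    (ε : ℕ → ℝ) (hε0 : ∀ n, 0 < ε n) (hε1 : ∀ n, ε n < 1)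
    (hεlim : Tendsto ε atTop (nhds 0))
    (hsum : ∀ n, (1 / (k n : ℝ)) * (Matrix.trace ((e n - e n ^ 2)ᴴ * (e n - e n ^ 2))).re
      ≤ ε n * (ε n - ε n ^ 2) ^ 2)
    (P : (n : ℕ) → Matrix (Fin (k n)) (Fin (k n)) ℂ)
    (hP : ∀ n, P n = U n * Matrix.diagonal
      (fun s => if 1 - ε n ≤ lam n s then (1 : ℂ) else 0) * (U n)ᴴ) :
    Tendsto (fun n => (1 / (k n : ℝ)) * (Matrix.trace ((e n - P n)ᴴ * (e n - P n))).re)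
      atTop (nhds 0) := by
  have hbounds n : (1 / (k n : ℝ)) * (trace ((e n - P n)ᴴ * (e n - P n))).re
      ∈ Icc 0 (ε n ^ 2 + ε n) := by
    simpa using normalized_trace_sq_sub_spectralProjection_mem_Icc (hU n) (hlam n) (hε0 n)
      (hε1 n) (hdecomp n) (hP n) (by simpa using hsum n)
  have hlim : Tendsto (fun n => ε n ^ 2 + ε n) atTop (nhds 0) := by
    simpa using (hεlim.pow 2).add hεlim
  exact tendsto_of_tendsto_of_tendsto_of_le_of_le tendsto_const_nhds hlim
    (fun n => (hbounds n).1) fun n => (hbounds n).2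

open Matrix Filter in
theorem stmt_3 (k : ℕ → ℕ) (hk : ∀ n, 1 ≤ k n)
    (e U : (n : ℕ) → Matrix (Fin (k n)) (Fin (k n)) ℂ)
    (he : ∀ n, (e n).IsHermitian)
    (hU : ∀ n, U n ∈ Matrix.unitaryGroup (Fin (k n)) ℂ)
    (lam : (n : ℕ) → Fin (k n) → ℝ)
    (hlam : ∀ n s, 0 ≤ lam n s ∧ lam n s ≤ 1)
    (hdecomp : ∀ n, e n = U n * Matrix.diagonal (fun s => (lam n s : ℂ)) * (U n)ᴴ)
    (ε : ℕ → ℝ) (hε0 : ∀ n, 0 < ε n) (hε1 : ∀ n, ε n < 1)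
    (hεlim : Tendsto ε atTop (nhds 0))
    (hsum : ∀ n, (1 / (k n : ℝ)) * (Matrix.trace ((e n - e n ^ 2)ᴴ * (e n - e n ^ 2))).re
      ≤ ε n * (ε n - ε n ^ 2) ^ 2)
    (P : (n : ℕ) → Matrix (Fin (k n)) (Fin (k n)) ℂ)
    (hP : ∀ n, P n = U n * Matrix.diagonal
      (fun s => if 1 - ε n ≤ lam n s then (1 : ℂ) else 0) * (U n)ᴴ) :
    Tendsto (fun n => (1 / (k n : ℝ)) * (Matrix.trace ((e n - P n)ᴴ * (e n - P n))).re)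
      atTop (nhds 0) :=
  stmt_3_general k e U hU lam hlam hdecomp ε hε0 hε1 hεlim hsum P hP
end
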